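/- arXiv:2604.20808 — 2 statements merged into one kernel-verified Lean document; each statement's English description precedes it below -/
import Mathlib

section
/- Let Γ be a simple graph on vertex set [m], I ⊆ [m], J = [m]\I. Let G be the kernel of the composite W_Γ → (Z/2)^m → (Z/2)^J of the abelianization map with the coordinate projection. Then G is the internal semidirect product of the normal closure of W_{Γ_I} in W_Γ (the normal factor) with the commutator subgroup [W_{Γ_J}, W_{Γ_J}] (viewed as a subgroup of W_Γ via the standard inclusion W_{Γ_J} ↪ W_Γ); i.e., the normal closure of W_{Γ_I} is normal in G, the two subgroups intersect trivially, and their product is G. -/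
def racgRels {V : Type} (Γ : SimpleGraph V) : Set (FreeGroup V) :=
  {r | (∃ i, r = FreeGroup.of i * FreeGroup.of i) ∨
       (∃ i j, Γ.Adj i j ∧
         r = FreeGroup.of i * FreeGroup.of j * (FreeGroup.of i)⁻¹ * (FreeGroup.of j)⁻¹)}

abbrev RACG {V : Type} (Γ : SimpleGraph V) : Type := PresentedGroup (racgRels Γ)

def racgGen {V : Type} (Γ : SimpleGraph V) (i : V) : RACG Γ := PresentedGroup.of i

open scoped Pointwise

/-!
Let `ρ : W_Γ → W_{Γ_J}` be the retraction killing the generators in `I`; the standard inclusion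
`ι` is a section of it. Its kernel is the normal closure `N` of the generators in `I`, since
modulo `N` every generator lies in the image of `ι`. The composite `W_Γ → (ℤ/2)^J` factors
through `ρ` as the mod-2 abelianization of `W_{Γ_J}`, whose kernel is the commutator subgroup
because the abelianization of a right-angled Coxeter group is `(ℤ/2)^J`. So `G = ρ⁻¹[W_J, W_J]`,
and for any split epimorphism `ρ` with section `ι` and any `K`, the preimage `ρ⁻¹ K` is the
internal semidirect product of `ker ρ` and `ι K`.
-/

section SplitEpi

variable {W H : Type*} [Group W] [Group H] {ρ : W →* H} {ι : H →* W}

open Function Subgroup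

theorem MonoidHom.ker_eq_normalClosure_of_leftInverse (hρι : LeftInverse ρ ι) {S : Set W}
    (hS : S ⊆ ρ.ker) (hgen : closure (S ∪ Set.range ι) = ⊤) :
    ρ.ker = normalClosure S := by
  refine le_antisymm (fun g hg => ?_) (normalClosure_le_normal hS)
  let π := QuotientGroup.mk' (normalClosure S)
  have hπ : π = (π.comp ι).comp ρ := by
    refine MonoidHom.eq_of_eqOn_dense hgen ?_
    rintro x (hx | ⟨y, rfl⟩)
    · have hπx : π x = 1 := (QuotientGroup.eq_one_iff x).mpr (subset_normalClosure hx)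
      simp [hπx, MonoidHom.mem_ker.mp (hS hx)]
    · simp [hρι y]
  have : π g = 1 := by rw [hπ]; simp [MonoidHom.mem_ker.mp hg]
  exact (QuotientGroup.eq_one_iff g).mp this

theorem MonoidHom.map_le_comap_of_leftInverse (hρι : LeftInverse ρ ι) (K : Subgroup H) :
    K.map ι ≤ K.comap ρ := by
  rintro _ ⟨k, hk, rfl⟩
  simpa [hρι k] using hk

theorem MonoidHom.ker_inf_map_eq_bot_of_leftInverse (hρι : LeftInverse ρ ι) (K : Subgroup H) :
    ρ.ker ⊓ K.map ι = ⊥ := by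
  rw [eq_bot_iff]
  rintro _ ⟨hker, k, -, rfl⟩
  have hk : k = 1 := (hρι k).symm.trans hker
  simp [hk]

theorem MonoidHom.ker_mul_map_eq_comap_of_leftInverse (hρι : LeftInverse ρ ι) (K : Subgroup H) :
    (ρ.ker : Set W) * K.map ι = K.comap ρ := by
  refine subset_antisymm ?_ fun g hg => ?_
  · rintro _ ⟨n, hn, _, ⟨k, hk, rfl⟩, rfl⟩
    simpa [MonoidHom.mem_ker.mp hn, hρι k] using hk
  · refine ⟨g * (ι (ρ g))⁻¹, ?_, ι (ρ g), ⟨ρ g, hg, rfl⟩, inv_mul_cancel_right g _⟩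
    simp [hρι (ρ g)]

end SplitEpi

section ZModTwo

variable {V A : Type*} [Fintype V] [CommGroup A]

def piZModTwoLift (a : V → A) (ha : ∀ i, a i ^ 2 = 1) :
    (V → Multiplicative (ZMod 2)) →* A where
  toFun f := ∏ i, a i ^ (f i).toAdd.val
  map_one' := by simp
  map_mul' f g := by
    rw [← Finset.prod_mul_distrib]
    refine Finset.prod_congr rfl fun i _ => ?_
    rw [← pow_add, Pi.mul_apply, toAdd_mul, ZMod.val_add, ← pow_eq_pow_mod _ (ha i)]

theorem piZModTwoLift_mulSingle [DecidableEq V] (a : V → A) (ha : ∀ i, a i ^ 2 = 1) (i : V) :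
    piZModTwoLift a ha (Pi.mulSingle i (Multiplicative.ofAdd 1)) = a i := by
  rw [piZModTwoLift, MonoidHom.coe_mk, OneHom.coe_mk, Finset.prod_eq_single i]
  · simp [ZMod.val_one]
  · intro j _ hj
    simp [Pi.mulSingle_eq_of_ne hj]
  · simp

end ZModTwo

section RACG

variable {V : Type} (Γ : SimpleGraph V)

theorem racgGen_mul_self (i : V) : racgGen Γ i * racgGen Γ i = 1 := by
  have := PresentedGroup.one_of_mem (rels := racgRels Γ) (Or.inl ⟨i, rfl⟩)
  rwa [map_mul] at this

theorem racgGen_commute {i j : V} (h : Γ.Adj i j) : Commute (racgGen Γ i) (racgGen Γ j) := by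
  have := PresentedGroup.one_of_mem (rels := racgRels Γ) (Or.inr ⟨i, j, h, rfl⟩)
  simp only [map_mul, map_inv] at this
  exact commutatorElement_eq_one_iff_commute.mp this

theorem closure_range_racgGen : Subgroup.closure (Set.range (racgGen Γ)) = ⊤ :=
  PresentedGroup.closure_range_of _

theorem racg_hom_ext {M : Type*} [Group M] {f g : RACG Γ →* M}
    (h : ∀ i, f (racgGen Γ i) = g (racgGen Γ i)) : f = g :=
  PresentedGroup.ext h

def racgLift {G : Type*} [Group G] (a : V → G) (ha : ∀ i, a i * a i = 1)
    (hcomm : ∀ i j, Γ.Adj i j → Commute (a i) (a j)) : RACG Γ →* G :=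
  PresentedGroup.toGroup (f := a) <| by
    rintro r (⟨i, rfl⟩ | ⟨i, j, hij, rfl⟩)
    · simpa using ha i
    · have := commutatorElement_eq_one_iff_commute.mpr (hcomm i j hij)
      simpa [commutatorElement_def] using this

@[simp]
theorem racgLift_racgGen {G : Type*} [Group G] (a : V → G) (ha : ∀ i, a i * a i = 1)
    (hcomm : ∀ i j, Γ.Adj i j → Commute (a i) (a j)) (i : V) :
    racgLift Γ a ha hcomm (racgGen Γ i) = a i :=
  PresentedGroup.toGroup.of _

theorem racg_ker_eq_commutator [Finite V] [DecidableEq V]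
    (φ : RACG Γ →* (V → Multiplicative (ZMod 2)))
    (hφ : ∀ i, φ (racgGen Γ i) = Pi.mulSingle i (Multiplicative.ofAdd (1 : ZMod 2))) :
    φ.ker = commutator (RACG Γ) := by
  cases nonempty_fintype V
  refine le_antisymm ?_ (Abelianization.commutator_subset_ker φ)
  have hsq : ∀ i, Abelianization.of (racgGen Γ i) ^ 2 = 1 := fun i => by
    rw [sq, ← map_mul, racgGen_mul_self, map_one]
  have hψ : (piZModTwoLift _ hsq).comp φ = Abelianization.of :=
    racg_hom_ext Γ fun i => by simp [hφ, piZModTwoLift_mulSingle]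
  rw [← Abelianization.ker_of, ← hψ, ← MonoidHom.comap_ker]
  exact φ.ker_le_comap _

open Classical in
noncomputable def racgRetract (s : Set V) : RACG Γ →* RACG (Γ.induce s) :=
  racgLift Γ (fun i => if h : i ∈ s then racgGen _ ⟨i, h⟩ else 1)
    (fun i => by split_ifs <;> simp [racgGen_mul_self])
    (fun i j hij => by
      split_ifs with hi hj hj
      · exact racgGen_commute _ (show (Γ.induce s).Adj ⟨i, hi⟩ ⟨j, hj⟩ from hij)
      all_goals simp)

variable {Γ} {s : Set V}

theorem racgRetract_racgGen_of_mem {i : V} (hi : i ∈ s) :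
    racgRetract Γ s (racgGen Γ i) = racgGen _ ⟨i, hi⟩ := by
  simp [racgRetract, hi]

theorem racgRetract_racgGen_of_notMem {i : V} (hi : i ∉ s) :
    racgRetract Γ s (racgGen Γ i) = 1 := by
  simp [racgRetract, hi]

variable {ι : RACG (Γ.induce s) →* RACG Γ} (hι : ∀ j, ι (racgGen _ j) = racgGen Γ j)
include hι

theorem racgRetract_leftInverse : Function.LeftInverse (racgRetract Γ s) ι :=
  DFunLike.congr_fun (f := (racgRetract Γ s).comp ι) (g := MonoidHom.id _) <|
    racg_hom_ext _ fun j => by simp [hι, racgRetract_racgGen_of_mem j.2]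

theorem ker_racgRetract :
    (racgRetract Γ s).ker = Subgroup.normalClosure (racgGen Γ '' sᶜ) := by
  refine MonoidHom.ker_eq_normalClosure_of_leftInverse (racgRetract_leftInverse hι) ?_ ?_
  · rintro _ ⟨i, hi, rfl⟩
    exact racgRetract_racgGen_of_notMem hi
  · rw [eq_top_iff, ← closure_range_racgGen, Subgroup.closure_le]
    rintro _ ⟨i, rfl⟩
    by_cases hi : i ∈ s
    · exact Subgroup.subset_closure (Or.inr ⟨racgGen _ ⟨i, hi⟩, hι _⟩)
    · exact Subgroup.subset_closure (Or.inl ⟨i, hi, rfl⟩)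

end RACG

/-- Let `G` be the kernel of the composite of the abelianization map `ab : W_Γ → (ℤ/2)^m`
with the coordinate projection onto `(ℤ/2)^J`, `J = [m] \ I`.  Then `G` is the internal
semidirect product of the normal closure `N` of the standard parabolic `W_{Γ_I}` with the
commutator subgroup `C = [W_{Γ_J}, W_{Γ_J}]` (included in `W_Γ` via the standard inclusion
`ι`): both lie in `G`, `N` is normal in `G`, `N ⊓ C = ⊥` and `N * C = G`. -/
theorem stmt4 {m : ℕ} (Γ : SimpleGraph (Fin m)) (I : Set (Fin m))
    (ab : RACG Γ →* (Fin m → Multiplicative (ZMod 2)))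
    (hab : ∀ i : Fin m, ab (racgGen Γ i) =
      fun j => if j = i then Multiplicative.ofAdd (1 : ZMod 2) else 1)
    (ι : RACG (Γ.induce Iᶜ) →* RACG Γ)
    (hι : ∀ j : (Iᶜ : Set (Fin m)), ι (racgGen (Γ.induce Iᶜ) j) = racgGen Γ j.val) :
    let proj : (Fin m → Multiplicative (ZMod 2)) →*
        ((Iᶜ : Set (Fin m)) → Multiplicative (ZMod 2)) :=
      { toFun := fun f j => f j.val, map_one' := rfl, map_mul' := fun _ _ => rfl }
    let G : Subgroup (RACG Γ) := (proj.comp ab).ker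
    let N : Subgroup (RACG Γ) := Subgroup.normalClosure (racgGen Γ '' I)
    let C : Subgroup (RACG Γ) := (commutator (RACG (Γ.induce Iᶜ))).map ι
    N ≤ G ∧ C ≤ G ∧ (∀ g ∈ G, ∀ n ∈ N, g * n * g⁻¹ ∈ N) ∧
      N ⊓ C = ⊥ ∧ (N : Set (RACG Γ)) * (C : Set (RACG Γ)) = (G : Set (RACG Γ)) := by
  intro proj G N C
  set ρ := racgRetract Γ Iᶜ
  have hρι : Function.LeftInverse ρ ι := racgRetract_leftInverse hι
  have hN : N = ρ.ker := by rw [ker_racgRetract hι, compl_compl]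
  have hab' (i : Fin m) :
      proj (ab (racgGen Γ i)) = fun j => if j.val = i then Multiplicative.ofAdd 1 else 1 := by
    rw [hab]; rfl
  have hfactor : proj.comp ab = ((proj.comp ab).comp ι).comp ρ := racg_hom_ext Γ fun i => by
    by_cases hi : i ∈ I
    · have hiJ : i ∉ Iᶜ := not_not.mpr hi
      funext j
      have hji : j.val ≠ i := fun h => j.2 (h ▸ hi)
      simp [ρ, racgRetract_racgGen_of_notMem hiJ, hab', hji]
    · simp [ρ, racgRetract_racgGen_of_mem (s := Iᶜ) hi, hι]
  have hG : G = (commutator _).comap ρ := by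
    rw [← racg_ker_eq_commutator _ ((proj.comp ab).comp ι), MonoidHom.comap_ker, ← hfactor]
    intro j
    simp only [MonoidHom.comp_apply, hι, hab']
    funext k
    simp [Pi.mulSingle_apply, Subtype.ext_iff]
  rw [hG, hN]
  exact ⟨ρ.ker_le_comap _, MonoidHom.map_le_comap_of_leftInverse hρι _,
    fun g _ n hn => ρ.normal_ker.conj_mem n hn g,
    MonoidHom.ker_inf_map_eq_bot_of_leftInverse hρι _,
    MonoidHom.ker_mul_map_eq_comap_of_leftInverse hρι _⟩
end

section
/- Let K be a simplicial complex on [m], I ∈ K a face, and J' ∈ lk_K(I). Then the subset {z ∈ (D²)^m : z_i = 0 for i ∈ I, z_i ∈ D² for i ∈ J', z_i ∈ S¹ for i ∉ I ∪ J'} is contained in the moment-angle complex Z_K, and the union of these subsets over all J' ∈ lk_K(I) equals the T^I-fixed point set of Z_K. -/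
def macC {V : Type} (K : Set (Finset V)) : Set (V → ℂ) :=
  {z | ∃ σ ∈ K, (∀ i, ‖z i‖ ≤ 1) ∧ ∀ i ∉ σ, ‖z i‖ = 1}

def torusFixed {m : ℕ} (K : Set (Finset (Fin m))) (I : Finset (Fin m)) :
    Set (Fin m → ℂ) :=
  {z ∈ macC K | ∀ t : Fin m → ℂ, (∀ i, ‖t i‖ = 1) → (∀ i ∉ I, t i = 1) →
    (fun i => t i * z i) = z}

/-- The link `lk_K(I) = {τ ⊆ [m] \ I : τ ∪ I ∈ K}`. -/
def linkOf {m : ℕ} (K : Set (Finset (Fin m))) (I : Finset (Fin m)) :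
    Set (Finset (Fin m)) :=
  {τ | (∀ i ∈ τ, i ∉ I) ∧ τ ∪ I ∈ K}

/-- The block `{z : z i = 0 for i ∈ I, z i ∈ D² for i ∈ J', z i ∈ S¹ otherwise}`. -/
def blockOf {m : ℕ} (I J' : Finset (Fin m)) : Set (Fin m → ℂ) :=
  {z | (∀ i ∈ I, z i = 0) ∧ (∀ i ∈ J', ‖z i‖ ≤ 1) ∧
       (∀ i, i ∉ I → i ∉ J' → ‖z i‖ = 1)}

/-- For a face `I ∈ K` and any `J' ∈ lk_K(I)`, the block
`{z : z i = 0 for i ∈ I, z i ∈ D² for i ∈ J', z i ∈ S¹ otherwise}` is contained in the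
moment-angle complex `Z_K`, and the union of these blocks over all `J' ∈ lk_K(I)`
equals the `T^I`-fixed point set of `Z_K`. -/
theorem stmt15 {m : ℕ} (K : Set (Finset (Fin m))) (I : Finset (Fin m)) (hI : I ∈ K) :
    (∀ J' ∈ linkOf K I, blockOf I J' ⊆ macC K) ∧
    (⋃ J' ∈ linkOf K I, blockOf I J') = torusFixed K I := by
  have hsub : ∀ J' ∈ linkOf K I, blockOf I J' ⊆ macC K := by
    intro J' hJ' z hz
    obtain ⟨h0, hle, hout⟩ := hz
    refine ⟨J' ∪ I, hJ'.2, ?_, ?_⟩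
    · intro i
      by_cases hiI : i ∈ I
      · simp [h0 i hiI]
      · by_cases hiJ : i ∈ J'
        · exact hle i hiJ
        · exact le_of_eq (hout i hiI hiJ)
    · intro i hi
      simp only [Finset.mem_union, not_or] at hi
      exact hout i hi.2 hi.1
  refine ⟨hsub, ?_⟩
  ext z
  simp only [Set.mem_iUnion, torusFixed, Set.mem_setOf_eq, Set.mem_sep_iff]
  constructor
  · rintro ⟨J', hJ', hz⟩
    refine ⟨hsub J' hJ' hz, ?_⟩
    intro t ht htI
    funext i
    by_cases hiI : i ∈ I
    · simp [hz.1 i hiI]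
    · simp [htI i hiI]
  · rintro ⟨⟨σ, hσK, hle, hout⟩, hfix⟩
    -- z i = 0 for i ∈ I
    have h0 : ∀ i ∈ I, z i = 0 := by
      intro i hiI
      have := hfix (fun j => if j ∈ I then -1 else 1)
        (by intro j; by_cases h : j ∈ I <;> simp [h])
        (by intro j hj; simp [hj])
      have := congrFun this i
      simp only [hiI, if_true] at this
      have : -z i = z i := by simpa using this
      have h2 : (2 : ℂ) * z i = 0 := by linear_combination -this
      simpa using h2
    have hIσ : I ⊆ σ := by
      intro i hiI
      by_contra h
      have := hout i h
      rw [h0 i hiI] at this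
      simp at this
    refine ⟨σ \ I, ⟨fun i hi => (Finset.mem_sdiff.mp hi).2, ?_⟩, h0, ?_, ?_⟩
    · rwa [Finset.sdiff_union_self_eq_union, Finset.union_eq_left.mpr hIσ]
    · intro i _; exact hle i
    · intro i hiI hiJ
      apply hout
      intro hiσ
      exact hiJ (Finset.mem_sdiff.mpr ⟨hiσ, hiI⟩)
end
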